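/- arXiv:2508.20713 — 2 statements merged into one kernel-verified Lean document; each statement's English description precedes it below -/
import Mathlib

section
/- Let M ≥ 1. If ⁅Φ, P (2m)⁆ = 0 holds for all m with 1 ≤ m ≤ M, then ⁅P k, P l⁆ = 0 holds for all k, l ≥ 1 with k + l ≤ 2M + 2. (Lemma property_boost_general of the Supplemental Material.) -/
/-!
Write `Q n = ad_B^n Φ`. The Leibniz rule gives
`⁅Q (a+1), Q b⁆ + ⁅Q a, Q (b+1)⁆ = ⁅B, ⁅Q a, Q b⁆⁆`, so once all brackets with index sum
`n` vanish, the brackets with index sum `n + 1` agree up to sign with `⁅Q 0, Q (n+1)⁆`.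
For even `n + 1 = 2t` that bracket is `±⁅Q t, Q t⁆ = 0`; for odd `n + 1` it vanishes by
hypothesis. Induction on the index sum finishes the proof.
-/

namespace LieRing

variable {L : Type*} [LieRing L] {B : L} {Q : ℕ → L}

theorem lie_succ_add_lie_succ (hQ : ∀ n, Q (n + 1) = ⁅B, Q n⁆) (a b : ℕ) :
    ⁅Q (a + 1), Q b⁆ + ⁅Q a, Q (b + 1)⁆ = ⁅B, ⁅Q a, Q b⁆⁆ := by
  rw [hQ, hQ, leibniz_lie B (Q a) (Q b)]

theorem lie_eq_zero_iff_lie_zero_eq_zero (hQ : ∀ n, Q (n + 1) = ⁅B, Q n⁆) {n : ℕ}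
    (hn : ∀ a b, a + b = n → ⁅Q a, Q b⁆ = 0) :
    ∀ a b, a + b = n + 1 → (⁅Q a, Q b⁆ = 0 ↔ ⁅Q 0, Q (n + 1)⁆ = 0) := by
  intro a
  induction a with
  | zero =>
    intro b hb
    rw [← hb, zero_add]
  | succ a ih =>
    intro b hab
    have hflip : ⁅Q (a + 1), Q b⁆ = -⁅Q a, Q (b + 1)⁆ := by
      rw [eq_neg_iff_add_eq_zero, lie_succ_add_lie_succ hQ, hn a b (by omega), lie_zero]
    rw [hflip, neg_eq_zero, ih (b + 1) (by omega)]

theorem lie_eq_zero_of_add_le (hQ : ∀ n, Q (n + 1) = ⁅B, Q n⁆) {M : ℕ}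
    (h : ∀ m < M, ⁅Q 0, Q (2 * m + 1)⁆ = 0) :
    ∀ n ≤ 2 * M, ∀ a b, a + b = n → ⁅Q a, Q b⁆ = 0 := by
  intro n
  induction n with
  | zero =>
    intro _ a b hab
    obtain ⟨rfl, rfl⟩ : a = 0 ∧ b = 0 := by omega
    exact lie_self _
  | succ n ih =>
    intro hn a b hab
    have hprev := ih (by omega)
    rw [lie_eq_zero_iff_lie_zero_eq_zero hQ hprev a b hab]
    obtain ⟨t, ht | ht⟩ := Nat.even_or_odd' (n + 1)
    · rw [← lie_eq_zero_iff_lie_zero_eq_zero hQ hprev t t (by omega)]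
      exact lie_self _
    · rw [ht]
      exact h t (by omega)

end LieRing

theorem property_boost_general_general {L : Type*} [LieRing L] (B Φ : L)
    (P : ℕ → L) (hP1 : P 1 = Φ)
    (hPrec : ∀ n, 1 ≤ n → P (n + 1) = ⁅B, P n⁆)
    (M : ℕ)
    (h : ∀ m, 1 ≤ m → m ≤ M → ⁅Φ, P (2 * m)⁆ = 0) :
    ∀ k l, 1 ≤ k → 1 ≤ l → k + l ≤ 2 * M + 2 → ⁅P k, P l⁆ = 0 := by
  have hQ : ∀ n, P (n + 1 + 1) = ⁅B, P (n + 1)⁆ := fun n => hPrec (n + 1) (by omega)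
  have hodd : ∀ m < M, ⁅P (0 + 1), P (2 * m + 1 + 1)⁆ = 0 := fun m hm => by
    rw [zero_add, hP1, show 2 * m + 1 + 1 = 2 * (m + 1) by ring]
    exact h (m + 1) (by omega) (by omega)
  intro k l hk hl hkl
  obtain ⟨a, rfl⟩ : ∃ a, k = a + 1 := ⟨k - 1, by omega⟩
  obtain ⟨b, rfl⟩ : ∃ b, l = b + 1 := ⟨l - 1, by omega⟩
  exact LieRing.lie_eq_zero_of_add_le (Q := fun n => P (n + 1)) hQ hodd (a + b) (by omega)
    a b rfl

/-- Lemma property_boost_general of the Supplemental Material: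
In a Lie ring `L`, with `P 1 = Φ` and `P (n+1) = ⁅B, P n⁆` for `n ≥ 1`, if
`⁅Φ, P (2m)⁆ = 0` for all `1 ≤ m ≤ M`, then `⁅P k, P l⁆ = 0` for all
`k, l ≥ 1` with `k + l ≤ 2M + 2`. -/
theorem property_boost_general {L : Type*} [LieRing L] (B Φ : L)
    (P : ℕ → L) (hP1 : P 1 = Φ)
    (hPrec : ∀ n, 1 ≤ n → P (n + 1) = ⁅B, P n⁆)
    (M : ℕ) (hM : 1 ≤ M)
    (h : ∀ m, 1 ≤ m → m ≤ M → ⁅Φ, P (2 * m)⁆ = 0) :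
    ∀ k l, 1 ≤ k → 1 ≤ l → k + l ≤ 2 * M + 2 → ⁅P k, P l⁆ = 0 :=
  property_boost_general_general B Φ P hP1 hPrec M h
end

section
/- Let A ⊆ {1,…,N} satisfy 1 ≤ r_N(A) ≤ (N+1)/2. Then there exists a unique a ∈ A such that π(a + r_N(A) − 1) ∈ A and A ⊆ π({a, a+1, …, a + r_N(A) − 1}). (Existence and uniqueness of the left-most site, as claimed in the Supplemental Material.) -/
/-!
Choose a cut `s_n` realising `r_N(A)`. The minimum `m` of `s_n(A)` projects to a site `a` of `A`
whose window of length `r_N(A)` ends at the projection of `max s_n(A) = m + r_N(A) - 1` and covers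
`A`. If two sites `a, b` both have covering windows, then `b ≡ a + j` and `a ≡ b + j'` with
`0 ≤ j, j' < r_N(A)`, so `N ∣ j + j'`; since `2 r_N(A) ≤ N + 1` forces `j + j' < N`, we get
`j = j' = 0` and hence `a = b`.
-/

/-- `projN N i` is the unique element of `{1, …, N}` congruent to `i` mod `N`. -/
def projN (N i : ℤ) : ℤ := (i - 1) % N + 1

/-- The cut `s_n` of the chain: `s_n i = i` if `i ≥ n`, and `i + N` if `i < n`. -/
def cutN (N n i : ℤ) : ℤ := if n ≤ i then i else i + N

/-- The range `r(A) = max A - min A + 1` of a finite nonempty set, with `r(∅) = 0`. -/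
def rng (A : Finset ℤ) : ℤ := if h : A.Nonempty then A.max' h - A.min' h + 1 else 0

/-- `r_N(A) = min over n ∈ {1,…,N} of r(s_n(A))`. -/
noncomputable def rN (N : ℤ) (A : Finset ℤ) : ℤ :=
  sInf ((fun n => rng (A.image (cutN N n))) '' Set.Icc 1 N)

open Finset

section projN

lemma projN_modEq (N i : ℤ) : projN N i ≡ i [ZMOD N] := by
  simpa [projN] using (Int.mod_modEq (i - 1) N).add_right 1

variable {N : ℤ}

lemma projN_eq_projN_iff {i j : ℤ} : projN N i = projN N j ↔ i ≡ j [ZMOD N] := by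
  rw [projN, projN, add_left_inj]
  exact ⟨fun h => by simpa using (show i - 1 ≡ j - 1 [ZMOD N] from h).add_right 1,
    fun h => h.sub_right 1⟩

lemma projN_eq_self {i : ℤ} (h : i ∈ Icc 1 N) : projN N i = i := by
  rw [mem_Icc] at h
  rw [projN, Int.emod_eq_of_lt (by omega) (by omega), sub_add_cancel]

lemma projN_cutN (n : ℤ) {i : ℤ} (h : i ∈ Icc 1 N) : projN N (cutN N n i) = i := by
  refine (projN_eq_projN_iff.mpr ?_).trans (projN_eq_self h)
  rw [cutN]
  split_ifs
  exacts [Int.ModEq.rfl, Int.add_modEq_right]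

lemma image_projN_image_cutN {A : Finset ℤ} (hA : A ⊆ Icc 1 N) (n : ℤ) :
    (A.image (cutN N n)).image (projN N) = A := by
  rw [image_image]
  exact (image_congr fun i hi => projN_cutN n (hA hi)).trans image_id'

lemma image_projN_Icc_of_modEq {a b : ℤ} (h : a ≡ b [ZMOD N]) (k : ℤ) :
    (Icc a (a + k)).image (projN N) = (Icc b (b + k)).image (projN N) := by
  have hshift : Icc a (a + k) = (Icc b (b + k)).image (· + (a - b)) := by
    rw [image_add_right_Icc]; congr 1 <;> ring
  rw [hshift, image_image]
  refine image_congr fun y _ => projN_eq_projN_iff.mpr ?_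
  simpa using (Int.ModEq.add_left y h.symm.dvd.modEq_zero_int).symm

end projN

lemma rng_eq_of_nonempty {B : Finset ℤ} (h : B.Nonempty) : rng B = B.max' h - B.min' h + 1 :=
  dif_pos h

lemma nonempty_of_rng_ne_zero {B : Finset ℤ} (h : rng B ≠ 0) : B.Nonempty := by
  by_contra hB
  exact h (dif_neg hB)

lemma exists_rng_eq_rN {N : ℤ} {A : Finset ℤ} (h : rN N A ≠ 0) :
    ∃ n, rng (A.image (cutN N n)) = rN N A := by
  set S := (fun n => rng (A.image (cutN N n))) '' Set.Icc 1 N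
  have hS : S.Nonempty := by
    rw [Set.nonempty_iff_ne_empty]
    rintro hS
    exact h (show sInf S = 0 by rw [hS, Int.csInf_empty])
  obtain ⟨n, -, hn⟩ := hS.csInf_mem ((Set.finite_Icc 1 N).image _)
  exact ⟨n, hn⟩

def IsLeftmostSite (N r : ℤ) (A : Finset ℤ) (a : ℤ) : Prop :=
  a ∈ A ∧ projN N (a + r - 1) ∈ A ∧ A ⊆ (Icc a (a + r - 1)).image (projN N)

lemma isLeftmostSite_projN_min' {N : ℤ} {A B : Finset ℤ} (hB : B.Nonempty)
    (hBA : B.image (projN N) = A) : IsLeftmostSite N (rng B) A (projN N (B.min' hB)) := by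
  set m := B.min' hB
  set M := B.max' hB
  have hlen : projN N m + rng B - 1 = projN N m + (M - m) := by
    rw [rng_eq_of_nonempty hB]; ring
  have hMlast : projN N (projN N m + (M - m)) = projN N M := by
    rw [projN_eq_projN_iff]
    simpa using (projN_modEq N m).add_right (M - m)
  rw [IsLeftmostSite, hlen, hMlast, image_projN_Icc_of_modEq (projN_modEq N m),
    add_sub_cancel, ← hBA]
  refine ⟨mem_image_of_mem _ (B.min'_mem hB), mem_image_of_mem _ (B.max'_mem hB), ?_⟩
  exact image_subset_image fun y hy => mem_Icc.mpr ⟨B.min'_le y hy, B.le_max' y hy⟩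

lemma IsLeftmostSite.unique {N r : ℤ} {A : Finset ℤ} {a b : ℤ} (ha : IsLeftmostSite N r A a)
    (hb : IsLeftmostSite N r A b) (hA : A ⊆ Icc 1 N) (hr : 2 * r ≤ N + 1) : a = b := by
  obtain ⟨y, hy, hya⟩ := mem_image.mp (hb.2.2 ha.1)
  obtain ⟨z, hz, hzb⟩ := mem_image.mp (ha.2.2 hb.1)
  rw [mem_Icc] at hy hz
  have hay : a ≡ y [ZMOD N] := hya ▸ projN_modEq N y
  have hbz : b ≡ z [ZMOD N] := hzb ▸ projN_modEq N z
  -- `(y - b) + (z - a)` is a multiple of `N` lying in `[0, 2r - 2]`, and `2r - 2 < N`.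
  have hsum : (y - a) + (z - b) = 0 :=
    Int.eq_zero_of_abs_lt_dvd (hay.dvd.add hbz.dvd) (abs_lt.mpr ⟨by omega, by omega⟩)
  have hyb : y = b := by omega
  rw [← projN_eq_self (hA ha.1), ← projN_eq_self (hA hb.1), projN_eq_projN_iff, ← hyb]
  exact hay

theorem leftmost_site_exists_unique_general (N : ℤ)
    (A : Finset ℤ) (hA : A ⊆ Finset.Icc 1 N)
    (h1 : 1 ≤ rN N A) (h2 : 2 * rN N A ≤ N + 1) :
    ∃! a, a ∈ A ∧ projN N (a + rN N A - 1) ∈ A ∧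
      A ⊆ (Finset.Icc a (a + rN N A - 1)).image (projN N) := by
  obtain ⟨n, hn⟩ := exists_rng_eq_rN (by omega : rN N A ≠ 0)
  have hB := nonempty_of_rng_ne_zero (hn ▸ (by omega : rN N A ≠ 0))
  have hsite := isLeftmostSite_projN_min' hB (image_projN_image_cutN hA n)
  rw [hn] at hsite
  exact ⟨_, hsite, fun b hb => IsLeftmostSite.unique hb hsite hA h2⟩

/-- existence and uniqueness of the left-most site: If
`A ⊆ {1,…,N}` and `1 ≤ r_N(A) ≤ (N+1)/2`, then there is a unique `a ∈ A` with
`π(a + r_N(A) − 1) ∈ A` and `A ⊆ π({a, …, a + r_N(A) − 1})`. -/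
theorem leftmost_site_exists_unique (N : ℤ) (hN : 1 ≤ N)
    (A : Finset ℤ) (hA : A ⊆ Finset.Icc 1 N)
    (h1 : 1 ≤ rN N A) (h2 : 2 * rN N A ≤ N + 1) :
    ∃! a, a ∈ A ∧ projN N (a + rN N A - 1) ∈ A ∧
      A ⊆ (Finset.Icc a (a + rN N A - 1)).image (projN N) :=
  leftmost_site_exists_unique_general N A hA h1 h2
end
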